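/- arXiv:2302.08218 — 2 statements merged into one kernel-verified Lean document; each statement's English description precedes it below -/
import Mathlib

section
/- Let h : ℝ → ℝ be continuously differentiable with exp(-h(x)/θ) integrable over (0,∞), x·exp(-h(x)/θ) → 0 as x → 0⁺ and as x → ∞, and x h'(x) exp(-h(x)/θ) integrable. Then ∫₀^∞ x h'(x) e^{-h(x)/θ} dx = θ ∫₀^∞ e^{-h(x)/θ} dx; equivalently, for the probability density σ_θ(x) ∝ e^{-h(x)/θ} on (0,∞), the expectation of x h'(x) equals θ. -/
open Real Filter Set MeasureTheory

/-! Integrating by parts against `u x = x`, the boundary terms `x e^{-h(x)/θ}` vanish at `0⁺` and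
at `∞`, and `x · d/dx e^{-h(x)/θ} = -x h'(x) e^{-h(x)/θ} / θ`. -/

theorem hasDerivAt_exp_neg_div {h : ℝ → ℝ} {h' x : ℝ} (θ : ℝ) (hh : HasDerivAt h h' x) :
    HasDerivAt (fun x => exp (-h x / θ)) (-(h' * exp (-h x / θ) / θ)) x :=
  (hh.neg.div_const θ).exp.congr_deriv (by simp only [Pi.neg_apply]; ring)

theorem theta_expression_population
    (θ : ℝ) (hθ : 0 < θ) (h : ℝ → ℝ) (hC1 : ContDiff ℝ 1 h)
    (hInt : IntegrableOn (fun x => exp (-h x / θ)) (Ioi 0))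
    (hlim0 : Tendsto (fun x => x * exp (-h x / θ)) (nhdsWithin 0 (Ioi 0)) (nhds 0))
    (hlimTop : Tendsto (fun x => x * exp (-h x / θ)) atTop (nhds 0))
    (hInt' : IntegrableOn (fun x => x * deriv h x * exp (-h x / θ)) (Ioi 0)) :
    ∫ x in Ioi (0:ℝ), x * deriv h x * exp (-h x / θ)
      = θ * ∫ x in Ioi (0:ℝ), exp (-h x / θ) := by
  have hh : Differentiable ℝ h := hC1.differentiable one_ne_zero
  have hv' : IntegrableOn (fun x => x * -(deriv h x * exp (-h x / θ) / θ)) (Ioi 0) := by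
    refine IntegrableOn.congr_fun (hInt'.div_const θ).neg (fun x _ => ?_) measurableSet_Ioi
    simp only [Pi.neg_apply]
    ring
  have hparts := integral_Ioi_mul_deriv_eq_deriv_mul (u := id) (u' := fun _ => 1)
    (fun x _ => hasDerivAt_id x) (fun x _ => hasDerivAt_exp_neg_div θ (hh x).hasDerivAt)
    hv' (by simpa [Pi.mul_def] using hInt) hlim0 hlimTop
  simp only [id, one_mul, sub_self, zero_sub, mul_neg, integral_neg, neg_inj] at hparts
  have hdiv : ∫ x in Ioi (0:ℝ), x * (deriv h x * exp (-h x / θ) / θ)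
      = (∫ x in Ioi (0:ℝ), x * deriv h x * exp (-h x / θ)) / θ := by
    rw [← integral_div]
    simp only [mul_div_assoc', mul_assoc]
  rw [hdiv, div_eq_iff hθ.ne'] at hparts
  linarith
end

section
/- With the logistic h-function h(x) = x/K − ln x on (0,∞), the density σ⁺(x,y) = C e^{-h(x)/θ} e^{-y²/(2θ)} satisfies −∂_x(λ x y σ⁺) − ∂_y((−λ(K⁻¹(x − K) − θ) − γ y)σ⁺) + γθ ∂²_y σ⁺ = 0 for all x > 0, y ∈ ℝ. -/
open Real

/-!
Writing `σ(x, y) = C e^{-h(x)/θ} e^{-y²/(2θ)}`, both derivatives of `σ` are `σ` times a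
logarithmic derivative: `∂ₓσ = -(h'(x)/θ) σ` and `∂_yσ = -(y/θ) σ`. Hence the Fokker–Planck
operator applied to `σ` is `σ` times a polynomial in `y`, and this polynomial vanishes identically
for the drift `-λ (x h'(x) - θ) - γ y`, whatever `h` is. For the logistic `h` one has
`x h'(x) = K⁻¹ (x - K)`.
-/

noncomputable def gibbsDensity (h : ℝ → ℝ) (θ C x y : ℝ) : ℝ :=
  C * exp (-h x / θ) * exp (-y ^ 2 / (2 * θ))

section

variable (θ C : ℝ)

theorem hasDerivAt_exp_neg_sq_div (y : ℝ) :
    HasDerivAt (fun y => exp (-y ^ 2 / (2 * θ))) (-(y / θ) * exp (-y ^ 2 / (2 * θ))) y := by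
  have hexponent : HasDerivAt (fun y => -y ^ 2 / (2 * θ)) (-(y / θ)) y := by
    refine ((hasDerivAt_pow 2 y).neg.div_const (2 * θ)).congr_deriv ?_
    ring
  simpa only [mul_comm] using hexponent.exp

theorem iteratedDeriv_two_exp_neg_sq_div (y : ℝ) :
    iteratedDeriv 2 (fun y => exp (-y ^ 2 / (2 * θ))) y
      = ((y / θ) ^ 2 - 1 / θ) * exp (-y ^ 2 / (2 * θ)) := by
  have hderiv : deriv (fun y => exp (-y ^ 2 / (2 * θ)))
      = fun y => -(y / θ) * exp (-y ^ 2 / (2 * θ)) :=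
    funext fun y => (hasDerivAt_exp_neg_sq_div θ y).deriv
  have hderiv2 : HasDerivAt (fun y => -(y / θ) * exp (-y ^ 2 / (2 * θ)))
      (((y / θ) ^ 2 - 1 / θ) * exp (-y ^ 2 / (2 * θ))) y :=
    (((hasDerivAt_id' y).div_const θ).neg.mul (hasDerivAt_exp_neg_sq_div θ y)).congr_deriv
      (by simp only [Pi.neg_apply]; ring)
  rw [iteratedDeriv_succ, iteratedDeriv_one, hderiv, hderiv2.deriv]

theorem hasDerivAt_gibbsDensity_left {h : ℝ → ℝ} {h' x : ℝ} (hh : HasDerivAt h h' x) (y : ℝ) :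
    HasDerivAt (fun x => gibbsDensity h θ C x y) (-(h' / θ) * gibbsDensity h θ C x y) x :=
  (((hh.neg.div_const θ).exp.const_mul C).mul_const (exp (-y ^ 2 / (2 * θ)))).congr_deriv
    (by simp only [Pi.neg_apply, gibbsDensity]; ring)

theorem hasDerivAt_gibbsDensity_right (h : ℝ → ℝ) (x y : ℝ) :
    HasDerivAt (gibbsDensity h θ C x) (-(y / θ) * gibbsDensity h θ C x y) y :=
  ((hasDerivAt_exp_neg_sq_div θ y).const_mul (C * exp (-h x / θ))).congr_deriv
    (by unfold gibbsDensity; ring)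

theorem iteratedDeriv_two_gibbsDensity_right (h : ℝ → ℝ) (x y : ℝ) :
    iteratedDeriv 2 (gibbsDensity h θ C x) y
      = ((y / θ) ^ 2 - 1 / θ) * gibbsDensity h θ C x y := by
  change iteratedDeriv 2 (fun y => C * exp (-h x / θ) * exp (-y ^ 2 / (2 * θ))) y = _
  rw [iteratedDeriv_const_mul_field, iteratedDeriv_two_exp_neg_sq_div, gibbsDensity]
  ring

end

theorem gibbsDensity_fokkerPlanck_stationary {h : ℝ → ℝ} {h' x θ : ℝ} (hh : HasDerivAt h h' x)
    (hθ : θ ≠ 0) (C lam gam y : ℝ) :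
    - deriv (fun x' => lam * x' * y * gibbsDensity h θ C x' y) x
      - deriv (fun y' => (-lam * (x * h' - θ) - gam * y') * gibbsDensity h θ C x y') y
      + gam * θ * iteratedDeriv 2 (gibbsDensity h θ C x) y = 0 := by
  have hflux_x : HasDerivAt (fun x' => lam * x' * y * gibbsDensity h θ C x' y)
      (lam * y * (1 - x * h' / θ) * gibbsDensity h θ C x y) x := by
    refine ((((hasDerivAt_id' x).const_mul lam).mul_const y).mul
      (hasDerivAt_gibbsDensity_left θ C hh y)).congr_deriv ?_
    ring
  have hflux_y : HasDerivAt (fun y' => (-lam * (x * h' - θ) - gam * y') * gibbsDensity h θ C x y')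
      ((-gam - (-lam * (x * h' - θ) - gam * y) * (y / θ)) * gibbsDensity h θ C x y) y := by
    refine (((hasDerivAt_const y (-lam * (x * h' - θ))).sub
      ((hasDerivAt_id' y).const_mul gam)).mul
        (hasDerivAt_gibbsDensity_right θ C h x y)).congr_deriv ?_
    simp only [Pi.sub_apply]
    ring
  rw [hflux_x.deriv, hflux_y.deriv, iteratedDeriv_two_gibbsDensity_right]
  field_simp
  ring

theorem fokker_planck_stationary_logistic_general
    (K lam gam θ C : ℝ) (hK : 0 < K) (hθ : 0 < θ)
    (h : ℝ → ℝ) (hh : h = fun x => x / K - Real.log x)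
    (σ : ℝ → ℝ → ℝ)
    (hσ : σ = fun x y => C * exp (-h x / θ) * exp (-y ^ 2 / (2 * θ))) :
    ∀ x : ℝ, 0 < x → ∀ y : ℝ,
      - deriv (fun x' => lam * x' * y * σ x' y) x
      - deriv (fun y' => (-lam * (K⁻¹ * (x - K) - θ) - gam * y') * σ x y') y
      + gam * θ * iteratedDeriv 2 (fun y' => σ x y') y = 0 := by
  intro x hx y
  have hderiv : HasDerivAt h (1 / K - x⁻¹) x := by
    subst hh
    exact ((hasDerivAt_id' x).div_const K).sub (hasDerivAt_log hx.ne')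
  have hlogistic : K⁻¹ * (x - K) = x * (1 / K - x⁻¹) := by
    field_simp
  subst hσ
  rw [hlogistic]
  exact gibbsDensity_fokkerPlanck_stationary hderiv hθ.ne' C lam gam y

theorem fokker_planck_stationary_logistic
    (K lam gam θ C : ℝ) (hK : 0 < K) (hlam : 0 < lam) (hgam : 0 < gam) (hθ : 0 < θ)
    (h : ℝ → ℝ) (hh : h = fun x => x / K - Real.log x)
    (σ : ℝ → ℝ → ℝ)
    (hσ : σ = fun x y => C * exp (-h x / θ) * exp (-y ^ 2 / (2 * θ))) :
    ∀ x : ℝ, 0 < x → ∀ y : ℝ,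
      - deriv (fun x' => lam * x' * y * σ x' y) x
      - deriv (fun y' => (-lam * (K⁻¹ * (x - K) - θ) - gam * y') * σ x y') y
      + gam * θ * iteratedDeriv 2 (fun y' => σ x y') y = 0 :=
  fokker_planck_stationary_logistic_general K lam gam θ C hK hθ h hh σ hσ
end
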